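/- Let 𝔤 be a quadratic Lie algebra, let 𝔭 ⊆ 𝔤 be a coisotropic Lie subalgebra, and let 𝔥 ⊆ 𝔭 be a Lie subalgebra such that 𝔭 = 𝔥 ⊕ 𝔭⊥ as vector spaces. Then: (a) the restriction of the bilinear form of 𝔤 to 𝔥 is nondegenerate, so 𝔥 is itself a quadratic Lie algebra; and (b) the subspace 𝔠 := { (ξ, ξ + μ) : ξ ∈ 𝔥, μ ∈ 𝔭⊥ } is a Lagrangian Lie subalgebra of 𝔥̄⊕𝔤, the direct sum Lie algebra 𝔥⊕𝔤 equipped with the form ⟨(ξ,x),(ξ′,x′)⟩ = −⟨ξ,ξ′⟩ + ⟨x,x′⟩. -/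

import Mathlib

section ProdLie
variable {L M : Type*} [LieRing L] [LieRing M]

instance prodBracket : Bracket (L × M) (L × M) :=
  ⟨fun x y => (⁅x.1, y.1⁆, ⁅x.2, y.2⁆)⟩

instance prodLieRing : LieRing (L × M) where
  add_lie x y z := Prod.ext (add_lie x.1 y.1 z.1) (add_lie x.2 y.2 z.2)
  lie_add x y z := Prod.ext (lie_add x.1 y.1 z.1) (lie_add x.2 y.2 z.2)
  lie_self x := Prod.ext (lie_self x.1) (lie_self x.2)
  leibniz_lie x y z := Prod.ext (leibniz_lie x.1 y.1 z.1) (leibniz_lie x.2 y.2 z.2)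

instance prodLieAlgebra {R : Type*} [CommRing R] [LieAlgebra R L] [LieAlgebra R M] :
    LieAlgebra R (L × M) where
  lie_smul t x y := Prod.ext (lie_smul t x.1 y.1) (lie_smul t x.2 y.2)

end ProdLie

variable {g : Type*} [LieRing g] [LieAlgebra ℝ g]

/-- The inclusion of a Lie subalgebra, as a linear map. -/
noncomputable def hIncl (h : LieSubalgebra ℝ g) : h →ₗ[ℝ] g := h.incl.toLinearMap

/-- The bilinear form of `𝔥̄ ⊕ 𝔤`: `⟨(ξ,x),(ξ′,x′)⟩ = −⟨ξ,ξ′⟩ + ⟨x,x′⟩`. -/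
noncomputable def hBarSumForm (B : LinearMap.BilinForm ℝ g) (h : LieSubalgebra ℝ g) :
    LinearMap.BilinForm ℝ (h × g) :=
  B.compl₁₂ (LinearMap.snd ℝ h g) (LinearMap.snd ℝ h g)
    - B.compl₁₂ ((hIncl h).comp (LinearMap.fst ℝ h g))
        ((hIncl h).comp (LinearMap.fst ℝ h g))

/-- The subspace `𝔠 = { (ξ, ξ + μ) : ξ ∈ 𝔥, μ ∈ 𝔭⊥ } ⊆ 𝔥̄ ⊕ 𝔤`. -/
noncomputable def fissionSub (B : LinearMap.BilinForm ℝ g) (h p : LieSubalgebra ℝ g) :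
    Submodule ℝ (h × g) :=
  (B.orthogonal p.toSubmodule).comap
    (LinearMap.snd ℝ h g - (hIncl h).comp (LinearMap.fst ℝ h g))

/-!
Since `𝔭` is a subalgebra and the form is invariant, `𝔭⊥` is an ideal of `𝔭` on which the form
vanishes (as `𝔭⊥ ⊆ 𝔭`). Hence both the bracket and the form of `𝔤`, restricted to `𝔭`, only see
classes modulo `𝔭⊥`. The elements of `𝔠` are the pairs `(ξ, x)` with `x ≡ ξ mod 𝔭⊥`, so `𝔠` is
closed under the bracket and isotropic for `−B|𝔥 + B`. Conversely, if `(ξ, x)` is orthogonal to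
`𝔠`, testing against `(0, μ)` gives `x ∈ 𝔭⊥⊥ = 𝔭`, and testing against `(η, η)` shows that
`x − ξ ∈ 𝔭` is orthogonal to `𝔥`, hence to `𝔥 + 𝔭⊥ = 𝔭`, i.e. `x − ξ ∈ 𝔭⊥`. The same last step
shows that `𝔥 ∩ 𝔥⊥ ⊆ 𝔥 ∩ 𝔭⊥ = 0`.
-/

namespace LinearMap.BilinForm

section Orthogonal

variable {R M : Type*} [CommRing R] [AddCommGroup M] [Module R M] {B : LinearMap.BilinForm R M}
  {W N : Submodule R M}

theorem mem_orthogonal_of_sup_orthogonal_eq (hB : B.IsRefl) (hWN : W ⊔ B.orthogonal N = N)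
    {x : M} (hxN : x ∈ N) (hxW : x ∈ B.orthogonal W) : x ∈ B.orthogonal N := by
  rw [mem_orthogonal_iff] at hxW ⊢
  intro n hn
  rw [← hWN] at hn
  obtain ⟨w, hw, μ, hμ, rfl⟩ := Submodule.mem_sup.mp hn
  rw [map_add, LinearMap.add_apply, hxW w hw, hB _ _ (hμ x hxN), add_zero]

theorem nondegenerate_restrict_of_sup_orthogonal_eq (hB : B.IsRefl)
    (hWN : W ⊔ B.orthogonal N = N) (hdisj : Disjoint W (B.orthogonal N)) :
    (B.restrict W).Nondegenerate := by
  refine B.nondegenerate_restrict_of_disjoint_orthogonal hB (Submodule.disjoint_def.mpr ?_)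
  intro x hxW hxW'
  have hxN : x ∈ N := by rw [← hWN]; exact Submodule.mem_sup_left hxW
  exact Submodule.disjoint_def.mp hdisj x hxW
    (mem_orthogonal_of_sup_orthogonal_eq hB hWN hxN hxW')

theorem apply_eq_apply_of_sub_mem_orthogonal (hB : B.IsRefl) (hcois : B.orthogonal N ≤ N)
    {x x' y y' : M} (hx : x ∈ N) (hx' : x' ∈ N) (hy : y - x ∈ B.orthogonal N)
    (hy' : y' - x' ∈ B.orthogonal N) : B y y' = B x x' := by
  have hxa : B x (y' - x') = 0 := hy' x hx
  have hax : B (y - x) x' = 0 := hB _ _ (hy x' hx')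
  have haa : B (y - x) (y' - x') = 0 := hy' _ (hcois hy)
  calc B y y' = B (x + (y - x)) (x' + (y' - x')) := by rw [add_sub_cancel, add_sub_cancel]
    _ = B x x' := by simp only [map_add, LinearMap.add_apply, hxa, hax, haa, add_zero]

end Orthogonal

section Lie

variable {R L : Type*} [CommRing R] [LieRing L] [LieAlgebra R L] {B : LinearMap.BilinForm R L}
  {p : LieSubalgebra R L}

theorem lie_mem_orthogonal (hinv : ∀ x y z : L, B ⁅x, y⁆ z + B y ⁅x, z⁆ = 0) {a μ : L}
    (ha : a ∈ p) (hμ : μ ∈ B.orthogonal p.toSubmodule) :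
    ⁅a, μ⁆ ∈ B.orthogonal p.toSubmodule := by
  intro n hn
  have h : B ⁅a, n⁆ μ = 0 := hμ _ (p.lie_mem ha hn)
  simpa [h] using hinv a n μ

theorem lie_sub_lie_mem_orthogonal (hinv : ∀ x y z : L, B ⁅x, y⁆ z + B y ⁅x, z⁆ = 0)
    (hcois : B.orthogonal p.toSubmodule ≤ p.toSubmodule) {x x' y y' : L} (hx : x ∈ p)
    (hx' : x' ∈ p) (hy : y - x ∈ B.orthogonal p.toSubmodule)
    (hy' : y' - x' ∈ B.orthogonal p.toSubmodule) :
    ⁅y, y'⁆ - ⁅x, x'⁆ ∈ B.orthogonal p.toSubmodule := by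
  have hexpand : ⁅y, y'⁆ - ⁅x, x'⁆ = ⁅x, y' - x'⁆ - ⁅x', y - x⁆ + ⁅y - x, y' - x'⁆ := by
    rw [← lie_skew x' (y - x)]
    simp only [lie_sub, sub_lie]
    abel
  rw [hexpand]
  exact add_mem (sub_mem (lie_mem_orthogonal hinv hx hy') (lie_mem_orthogonal hinv hx' hy))
    (lie_mem_orthogonal hinv (hcois hy) hy')

end Lie

end LinearMap.BilinForm

open LinearMap.BilinForm

theorem mem_fissionSub {B : LinearMap.BilinForm ℝ g} {h p : LieSubalgebra ℝ g} {z : h × g} :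
    z ∈ fissionSub B h p ↔ z.2 - z.1 ∈ B.orthogonal p.toSubmodule :=
  Iff.rfl

theorem hBarSumForm_apply (B : LinearMap.BilinForm ℝ g) (h : LieSubalgebra ℝ g) (z w : h × g) :
    hBarSumForm B h z w = B z.2 w.2 - B z.1 w.1 :=
  rfl

section Fission

variable {B : LinearMap.BilinForm ℝ g} {h p : LieSubalgebra ℝ g}

theorem lie_mem_fissionSub (hinv : ∀ x y z : g, B ⁅x, y⁆ z + B y ⁅x, z⁆ = 0) (hhp : h ≤ p)
    (hcois : B.orthogonal p.toSubmodule ≤ p.toSubmodule) {z w : h × g}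
    (hz : z ∈ fissionSub B h p) (hw : w ∈ fissionSub B h p) : ⁅z, w⁆ ∈ fissionSub B h p :=
  lie_sub_lie_mem_orthogonal hinv hcois (hhp z.1.2) (hhp w.1.2) hz hw

theorem fissionSub_le_orthogonal (hB : B.IsRefl) (hhp : h ≤ p)
    (hcois : B.orthogonal p.toSubmodule ≤ p.toSubmodule) :
    fissionSub B h p ≤ (hBarSumForm B h).orthogonal (fissionSub B h p) := by
  intro z hz
  rw [mem_orthogonal_iff]
  intro w hw
  rw [hBarSumForm_apply, sub_eq_zero]
  exact apply_eq_apply_of_sub_mem_orthogonal hB hcois (hhp w.1.2) (hhp z.1.2) hw hz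

theorem orthogonal_fissionSub_le [FiniteDimensional ℝ g] (hB : B.IsRefl)
    (hnondeg : B.Nondegenerate) (hhp : h ≤ p)
    (hsum : h.toSubmodule ⊔ B.orthogonal p.toSubmodule = p.toSubmodule) :
    (hBarSumForm B h).orthogonal (fissionSub B h p) ≤ fissionSub B h p := by
  intro z hz
  rw [mem_orthogonal_iff] at hz
  have hz₂ : z.2 ∈ p := by
    rw [← LieSubalgebra.mem_toSubmodule, ← B.orthogonal_orthogonal hnondeg hB p.toSubmodule]
    intro μ hμ
    simpa [hBarSumForm_apply] using hz ((0 : h), μ) (by simpa [mem_fissionSub] using hμ)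
  rw [mem_fissionSub]
  refine mem_orthogonal_of_sup_orthogonal_eq hB hsum (sub_mem hz₂ (hhp z.1.2)) ?_
  rw [mem_orthogonal_iff]
  intro ξ hξ
  have hξξ : ((⟨ξ, hξ⟩ : h), ξ) ∈ fissionSub B h p := by simp [mem_fissionSub]
  have h0 := hz _ hξξ
  rw [hBarSumForm_apply, sub_eq_zero] at h0
  rw [map_sub, sub_eq_zero]
  exact h0

end Fission

/-- Let `𝔤` be a quadratic Lie algebra, `𝔭 ⊆ 𝔤` a coisotropic Lie subalgebra
and `𝔥 ⊆ 𝔭` a Lie subalgebra with `𝔭 = 𝔥 ⊕ 𝔭⊥` as vector spaces.  Then (a) the restriction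
of the form to `𝔥` is nondegenerate (so `𝔥` is a quadratic Lie algebra), and (b)
`𝔠 = { (ξ, ξ + μ) : ξ ∈ 𝔥, μ ∈ 𝔭⊥ }` is a Lagrangian Lie subalgebra of `𝔥̄ ⊕ 𝔤`. -/
theorem fission_coisotropic_lagrangian
    [FiniteDimensional ℝ g]
    (B : LinearMap.BilinForm ℝ g) (hsymm : B.IsSymm) (hnondeg : B.Nondegenerate)
    (hinv : ∀ x y z : g, B ⁅x, y⁆ z + B y ⁅x, z⁆ = 0)
    (p h : LieSubalgebra ℝ g) (hhp : h ≤ p)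
    (hcois : B.orthogonal p.toSubmodule ≤ p.toSubmodule)
    (hdisj : Disjoint h.toSubmodule (B.orthogonal p.toSubmodule))
    (hsum : h.toSubmodule ⊔ B.orthogonal p.toSubmodule = p.toSubmodule) :
    -- (a) the restriction of `B` to `𝔥` is nondegenerate,
    (B.restrict h.toSubmodule).Nondegenerate ∧
    -- (b) `𝔠` is a Lie subalgebra of `𝔥̄ ⊕ 𝔤` (closed under the componentwise bracket),
    (∀ z ∈ fissionSub B h p, ∀ w ∈ fissionSub B h p, ⁅z, w⁆ ∈ fissionSub B h p) ∧
    -- and it is Lagrangian.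
    (hBarSumForm B h).orthogonal (fissionSub B h p) = fissionSub B h p := by
  refine ⟨nondegenerate_restrict_of_sup_orthogonal_eq hsymm.isRefl hsum hdisj,
    fun z hz w hw => lie_mem_fissionSub hinv hhp hcois hz hw, ?_⟩
  exact le_antisymm (orthogonal_fissionSub_le hsymm.isRefl hnondeg hhp hsum)
    (fissionSub_le_orthogonal hsymm.isRefl hhp hcois)
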